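/- The matrix L* + D is invertible, A := (L* + D)^{-1} B is entrywise nonnegative with each diagonal layer block entrywise positive, and the product A F* is an entrywise-positive (hence irreducible) nm×nm matrix. -/

import Mathlib

/-!
`M = L* + D` is a Z-matrix whose row sums are `δ ≥ 0`, the dispersal part contributing nothing
because `π^α` is stationary; irreducibility of `Q^α` joins every row of layer `α`, through
negative entries, to a row with `δ^α_k > 0`. For such weakly chained diagonally dominant
Z-matrices a minimum principle gives `M x ≥ 0 → x ≥ 0`, hence invertibility and `M⁻¹ ≥ 0`, and
a zero of a nonnegative supersolution spreads along negative entries, which makes `M⁻¹`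
positive on each layer block. Finally `(A F*)_{q q'} ≥ A_{q, (q.1, q'.2)} F*_{(q.1, q'.2), q'} > 0`.
-/

open Matrix BigOperators Finset

/-- Spectral abscissa of a real square matrix: the maximum of the real parts of its
(complex) eigenvalues. -/
noncomputable def specAbscissa {k : Type*} [Fintype k] [DecidableEq k]
    (M : Matrix k k ℝ) : ℝ :=
  sSup {r : ℝ | ∃ z ∈ spectrum ℂ (M.map Complex.ofReal), z.re = r}

/-- Diagonal `nm × nm` matrix (indexed by pairs `(α, i)`) built from rates `c^α_i`. -/
noncomputable def pairDiag {n m : ℕ} (c : Fin m → Fin n → ℝ) :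
    Matrix (Fin m × Fin n) (Fin m × Fin n) ℝ :=
  Matrix.diagonal fun q => c q.1 q.2

/-- The equilibrium dispersal Laplacian `L*`: block-diagonal, whose `α`-th `n × n` block
has `(i,i)` entry `ν^α_i = ∑_{j ≠ i} q^α_{ij}` and `(i,j)` entry `-q^α_{ji} π^α_j / π^α_i`
for `j ≠ i`. -/
noncomputable def Lstar {n m : ℕ} (Q : Fin m → Matrix (Fin n) (Fin n) ℝ)
    (piv : Fin m → Fin n → ℝ) : Matrix (Fin m × Fin n) (Fin m × Fin n) ℝ :=
  Matrix.of fun q q' =>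
    if q.1 = q'.1 then
      (if q.2 = q'.2 then ∑ j ∈ Finset.univ \ {q.2}, Q q.1 q.2 j
       else -(Q q.1 q'.2 q.2 * piv q.1 q'.2 / piv q.1 q.2))
    else 0

/-- The equilibrium population-fraction matrix `F*`: the `(α,σ)` block is the diagonal
matrix with entries `f^{*σ}_i = N^σ π^σ_i / ∑_τ N^τ π^τ_i` (the same row of blocks
repeated for every `α`). -/
noncomputable def Fstar {n m : ℕ} (N : Fin m → ℝ) (piv : Fin m → Fin n → ℝ) :
    Matrix (Fin m × Fin n) (Fin m × Fin n) ℝ :=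
  Matrix.of fun q q' =>
    if q.2 = q'.2 then N q'.1 * piv q'.1 q.2 / ∑ τ, N τ * piv τ q.2 else 0

/-- The matrix `A = (L* + D)⁻¹ B`. -/
noncomputable def Amat {n m : ℕ} (Q : Fin m → Matrix (Fin n) (Fin n) ℝ)
    (piv : Fin m → Fin n → ℝ) (β δ : Fin m → Fin n → ℝ) :
    Matrix (Fin m × Fin n) (Fin m × Fin n) ℝ :=
  (Lstar Q piv + pairDiag δ)⁻¹ * pairDiag β

namespace Matrix

variable {ι : Type*} [Fintype ι]

/-- A weakly chained diagonally dominant Z-matrix. -/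
structure IsChainedDominantZMatrix (M : Matrix ι ι ℝ) : Prop where
  off_diag_nonpos : ∀ i j, i ≠ j → M i j ≤ 0
  row_sum_nonneg : ∀ i, 0 ≤ ∑ j, M i j
  reaches_pos_row_sum :
    ∀ i, ∃ k, Relation.ReflTransGen (fun a b => M a b < 0) i k ∧ 0 < ∑ j, M k j

variable {M : Matrix ι ι ℝ}

theorem mulVec_apply_le_of_eq_zero (hoff : ∀ i j, i ≠ j → M i j ≤ 0) {x : ι → ℝ}
    (hx : ∀ i, 0 ≤ x i) {a : ι} (ha : x a = 0) (b : ι) : (M *ᵥ x) a ≤ M a b * x b := by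
  classical
  rw [mulVec, dotProduct, ← Finset.add_sum_erase _ _ (Finset.mem_univ b)]
  refine add_le_of_nonpos_right (Finset.sum_nonpos fun k _ => ?_)
  rcases eq_or_ne a k with rfl | hak
  · simp [ha]
  · exact mul_nonpos_of_nonpos_of_nonneg (hoff a k hak) (hx k)

/-- Strong maximum principle: a zero of a nonnegative supersolution `x` propagates along the
negative entries of `M`, so it cannot reach a row where `M x` is positive. -/
theorem pos_of_reflTransGen_of_mulVec_pos (hoff : ∀ i j, i ≠ j → M i j ≤ 0) {x : ι → ℝ}
    (hx : ∀ i, 0 ≤ x i) (hMx : ∀ i, 0 ≤ (M *ᵥ x) i) {i j : ι}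
    (hij : Relation.ReflTransGen (fun a b => M a b < 0) i j) (hj : 0 < (M *ᵥ x) j) :
    0 < x i := by
  induction hij using Relation.ReflTransGen.head_induction_on with
  | refl =>
    refine (hx j).lt_of_ne' fun hxj => ?_
    have := mulVec_apply_le_of_eq_zero hoff hx hxj j
    rw [hxj, mul_zero] at this
    linarith
  | @head a b hab _ hb =>
    refine (hx a).lt_of_ne' fun hxa => ?_
    have := mulVec_apply_le_of_eq_zero hoff hx hxa b
    linarith [hMx a, mul_neg_of_neg_of_pos hab hb]

namespace IsChainedDominantZMatrix

/-- Shifting `x` by its negative minimum keeps `M x ≥ 0` and makes it positive on every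
row with positive sum, which the minimiser reaches. -/
theorem nonneg_of_mulVec_nonneg (hM : IsChainedDominantZMatrix M) {x : ι → ℝ}
    (hMx : ∀ i, 0 ≤ (M *ᵥ x) i) (i : ι) : 0 ≤ x i := by
  by_contra! hi₀
  have : Nonempty ι := ⟨i⟩
  obtain ⟨i, hmin⟩ := Finite.exists_min x
  have hc : x i < 0 := (hmin _).trans_lt hi₀
  set y : ι → ℝ := fun j => x j - x i
  have hMy : ∀ k, (M *ᵥ y) k = (M *ᵥ x) k - x i * ∑ j, M k j := by
    intro k
    simp only [y, mulVec, dotProduct, mul_sub, Finset.sum_sub_distrib, Finset.mul_sum, mul_comm]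
  have hy : ∀ j, 0 ≤ y j := fun j => sub_nonneg.mpr (hmin j)
  have hMy_nonneg : ∀ k, 0 ≤ (M *ᵥ y) k := fun k => by
    rw [hMy]; nlinarith [hMx k, hM.row_sum_nonneg k]
  obtain ⟨k, hik, hk⟩ := hM.reaches_pos_row_sum i
  have := pos_of_reflTransGen_of_mulVec_pos hM.off_diag_nonpos hy hMy_nonneg hik
    (by rw [hMy]; linarith [hMx k, mul_neg_of_neg_of_pos hc hk])
  simp [y] at this

variable [DecidableEq ι]

theorem isUnit (hM : IsChainedDominantZMatrix M) : IsUnit M := by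
  refine mulVec_injective_iff_isUnit.mp fun x y hxy => ?_
  have h₁ := hM.nonneg_of_mulVec_nonneg (x := x - y)
    (fun i => by rw [mulVec_sub, hxy, sub_self]; rfl)
  have h₂ := hM.nonneg_of_mulVec_nonneg (x := y - x)
    (fun i => by rw [mulVec_sub, hxy, sub_self]; rfl)
  exact funext fun i => le_antisymm (sub_nonneg.mp (h₂ i)) (sub_nonneg.mp (h₁ i))

theorem mulVec_inv_col (hM : IsChainedDominantZMatrix M) (j : ι) :
    M *ᵥ (M⁻¹).col j = Pi.single j 1 := by
  rw [← mulVec_single_one, mulVec_mulVec,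
    mul_nonsing_inv _ ((isUnit_iff_isUnit_det M).mp hM.isUnit), one_mulVec]

theorem mulVec_inv_col_nonneg (hM : IsChainedDominantZMatrix M) (j k : ι) :
    0 ≤ (M *ᵥ (M⁻¹).col j) k := by
  rw [hM.mulVec_inv_col, Pi.single_apply]
  split_ifs <;> norm_num

theorem inv_apply_nonneg (hM : IsChainedDominantZMatrix M) (i j : ι) : 0 ≤ M⁻¹ i j :=
  hM.nonneg_of_mulVec_nonneg (hM.mulVec_inv_col_nonneg j) i

theorem inv_apply_pos (hM : IsChainedDominantZMatrix M) {i j : ι}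
    (hij : Relation.ReflTransGen (fun a b => M a b < 0) i j) : 0 < M⁻¹ i j :=
  pos_of_reflTransGen_of_mulVec_pos (x := (M⁻¹).col j) hM.off_diag_nonpos
    (fun k => hM.inv_apply_nonneg k j) (hM.mulVec_inv_col_nonneg j) hij
    (by simp [hM.mulVec_inv_col])

end IsChainedDominantZMatrix

theorem mul_apply_pos_of_nonneg {l m n : Type*} [Fintype m] {A : Matrix l m ℝ}
    {B : Matrix m n ℝ} (hA : ∀ i j, 0 ≤ A i j) (hB : ∀ i j, 0 ≤ B i j) {i : l} {k : n} (j : m)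
    (hAj : 0 < A i j) (hBj : 0 < B j k) : 0 < (A * B) i k :=
  Finset.sum_pos' (fun p _ => mul_nonneg (hA i p) (hB p k)) ⟨j, Finset.mem_univ _, mul_pos hAj hBj⟩

end Matrix

section Dispersal

variable {n m : ℕ} {Q : Fin m → Matrix (Fin n) (Fin n) ℝ} {piv : Fin m → Fin n → ℝ}

theorem Lstar_apply_of_fst_ne {q q' : Fin m × Fin n} (h : q.1 ≠ q'.1) :
    Lstar Q piv q q' = 0 := by
  simp [Lstar, h]

theorem Lstar_apply_of_snd_ne (α : Fin m) {i k : Fin n} (h : i ≠ k) :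
    Lstar Q piv (α, i) (α, k) = -(Q α k i * piv α k / piv α i) := by
  simp [Lstar, h]

/-- On the diagonal, `ν^α_i = -q^α_{ii}`, so the off-diagonal formula holds there too. -/
theorem Lstar_apply_same_layer
    (hQdiag : ∀ (α : Fin m) (i : Fin n), Q α i i = -∑ j ∈ Finset.univ \ {i}, Q α i j)
    (hpivpos : ∀ α i, 0 < piv α i) (α : Fin m) (i k : Fin n) :
    Lstar Q piv (α, i) (α, k) = -(Q α k i * piv α k / piv α i) := by
  rcases eq_or_ne i k with rfl | h
  · rw [mul_div_assoc, div_self (hpivpos α i).ne', mul_one, hQdiag α i, neg_neg]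
    simp [Lstar]
  · exact Lstar_apply_of_snd_ne α h

theorem Lstar_apply_nonpos (hQoff : ∀ (α : Fin m) (i j : Fin n), i ≠ j → 0 ≤ Q α i j)
    (hpivpos : ∀ α i, 0 < piv α i) {q q' : Fin m × Fin n} (h : q ≠ q') :
    Lstar Q piv q q' ≤ 0 := by
  obtain ⟨α, i⟩ := q
  obtain ⟨σ, k⟩ := q'
  rcases eq_or_ne α σ with rfl | hασ
  · have hik : i ≠ k := fun hik => h (by rw [hik])
    rw [Lstar_apply_of_snd_ne α hik, neg_nonpos]
    exact div_nonneg (mul_nonneg (hQoff α k i hik.symm) (hpivpos α k).le) (hpivpos α i).le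
  · exact (Lstar_apply_of_fst_ne hασ).le

/-- Stationarity of `π^α` for `Q^α`. -/
theorem sum_Lstar_apply
    (hQdiag : ∀ (α : Fin m) (i : Fin n), Q α i i = -∑ j ∈ Finset.univ \ {i}, Q α i j)
    (hpivpos : ∀ α i, 0 < piv α i)
    (hpiveig : ∀ (α : Fin m) (i : Fin n), ∑ j, Q α j i * piv α j = 0) (q : Fin m × Fin n) :
    ∑ q', Lstar Q piv q q' = 0 := by
  obtain ⟨α, i⟩ := q
  rw [Fintype.sum_prod_type, Finset.sum_eq_single α
    (fun σ _ h => Finset.sum_eq_zero fun k _ => Lstar_apply_of_fst_ne (Ne.symm h))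
    (by simp)]
  simp only [Lstar_apply_same_layer hQdiag hpivpos, Finset.sum_neg_distrib, ← Finset.sum_div,
    hpiveig, zero_div, neg_zero]

variable {δ : Fin m → Fin n → ℝ}

theorem sum_Lstar_add_pairDiag_apply
    (hQdiag : ∀ (α : Fin m) (i : Fin n), Q α i i = -∑ j ∈ Finset.univ \ {i}, Q α i j)
    (hpivpos : ∀ α i, 0 < piv α i)
    (hpiveig : ∀ (α : Fin m) (i : Fin n), ∑ j, Q α j i * piv α j = 0) (q : Fin m × Fin n) :
    ∑ q', (Lstar Q piv + pairDiag δ) q q' = δ q.1 q.2 := by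
  simp only [Matrix.add_apply, Finset.sum_add_distrib, sum_Lstar_apply hQdiag hpivpos hpiveig,
    zero_add, pairDiag, Matrix.diagonal_apply, Finset.sum_ite_eq, Finset.mem_univ, if_true]

theorem Lstar_add_pairDiag_apply_of_ne {q q' : Fin m × Fin n} (h : q ≠ q') :
    (Lstar Q piv + pairDiag δ) q q' = Lstar Q piv q q' := by
  rw [Matrix.add_apply, pairDiag, Matrix.diagonal_apply_ne _ h, add_zero]

theorem Lstar_add_pairDiag_apply_nonpos
    (hQoff : ∀ (α : Fin m) (i j : Fin n), i ≠ j → 0 ≤ Q α i j)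
    (hpivpos : ∀ α i, 0 < piv α i) {q q' : Fin m × Fin n} (h : q ≠ q') :
    (Lstar Q piv + pairDiag δ) q q' ≤ 0 := by
  rw [Lstar_add_pairDiag_apply_of_ne h]
  exact Lstar_apply_nonpos hQoff hpivpos h

/-- An edge `k → i` of `Q^α` is a negative entry at `((α, i), (α, k))`: paths are reversed. -/
theorem reflTransGen_Lstar_add_pairDiag
    (hQoff : ∀ (α : Fin m) (i j : Fin n), i ≠ j → 0 ≤ Q α i j)
    (hQdiag : ∀ (α : Fin m) (i : Fin n), Q α i i = -∑ j ∈ Finset.univ \ {i}, Q α i j)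
    (hQirr : ∀ (α : Fin m) (i j : Fin n),
      Relation.ReflTransGen (fun a b => 0 < Q α a b) i j)
    (hpivpos : ∀ α i, 0 < piv α i) (α : Fin m) (i k : Fin n) :
    Relation.ReflTransGen (fun a b => (Lstar Q piv + pairDiag δ) a b < 0) (α, i) (α, k) := by
  refine Relation.ReflTransGen.lift (fun a => (α, a)) (fun b a hQ => ?_) i k
    (Relation.ReflTransGen.swap i k (hQirr α k i))
  have hab : a ≠ b := by
    rintro rfl
    have : 0 ≤ ∑ j ∈ Finset.univ \ {a}, Q α a j :=
      Finset.sum_nonneg fun j hj => hQoff α a j (by simpa [eq_comm] using hj)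
    linarith [hQdiag α a]
  show (Lstar Q piv + pairDiag δ) (α, b) (α, a) < 0
  rw [Lstar_add_pairDiag_apply_of_ne (by simpa using hab.symm), Lstar_apply_of_snd_ne α hab.symm,
    neg_lt_zero]
  exact div_pos (mul_pos hQ (hpivpos α a)) (hpivpos α b)

theorem isChainedDominantZMatrix_Lstar_add_pairDiag
    (hQoff : ∀ (α : Fin m) (i j : Fin n), i ≠ j → 0 ≤ Q α i j)
    (hQdiag : ∀ (α : Fin m) (i : Fin n), Q α i i = -∑ j ∈ Finset.univ \ {i}, Q α i j)
    (hQirr : ∀ (α : Fin m) (i j : Fin n),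
      Relation.ReflTransGen (fun a b => 0 < Q α a b) i j)
    (hpivpos : ∀ α i, 0 < piv α i)
    (hpiveig : ∀ (α : Fin m) (i : Fin n), ∑ j, Q α j i * piv α j = 0)
    (hδ : ∀ α i, 0 ≤ δ α i) (hδpos : ∀ α, ∃ k, 0 < δ α k) :
    (Lstar Q piv + pairDiag δ).IsChainedDominantZMatrix where
  off_diag_nonpos _ _ := Lstar_add_pairDiag_apply_nonpos hQoff hpivpos
  row_sum_nonneg q := by
    rw [sum_Lstar_add_pairDiag_apply hQdiag hpivpos hpiveig]
    exact hδ q.1 q.2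
  reaches_pos_row_sum := by
    rintro ⟨α, i⟩
    obtain ⟨k, hk⟩ := hδpos α
    refine ⟨(α, k), reflTransGen_Lstar_add_pairDiag hQoff hQdiag hQirr hpivpos α i k, ?_⟩
    rwa [sum_Lstar_add_pairDiag_apply hQdiag hpivpos hpiveig]

end Dispersal

theorem Fstar_nonneg {n m : ℕ} {N : Fin m → ℝ} {piv : Fin m → Fin n → ℝ} (hN : ∀ α, 0 ≤ N α)
    (hpiv : ∀ α i, 0 ≤ piv α i) (q q' : Fin m × Fin n) : 0 ≤ Fstar N piv q q' := by
  rw [Fstar, Matrix.of_apply]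
  split_ifs
  · exact div_nonneg (mul_nonneg (hN _) (hpiv _ _))
      (Finset.sum_nonneg fun τ _ => mul_nonneg (hN τ) (hpiv τ _))
  · exact le_rfl

theorem Fstar_pos {n m : ℕ} {N : Fin m → ℝ} {piv : Fin m → Fin n → ℝ} (hN : ∀ α, 0 < N α)
    (hpiv : ∀ α i, 0 < piv α i) {q q' : Fin m × Fin n} (h : q.2 = q'.2) :
    0 < Fstar N piv q q' := by
  rw [Fstar, Matrix.of_apply, if_pos h]
  exact div_pos (mul_pos (hN _) (hpiv _ _))
    (Finset.sum_pos (fun τ _ => mul_pos (hN τ) (hpiv τ _)) ⟨q.1, Finset.mem_univ _⟩)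

theorem Amat_apply {n m : ℕ} (Q : Fin m → Matrix (Fin n) (Fin n) ℝ) (piv : Fin m → Fin n → ℝ)
    (β δ : Fin m → Fin n → ℝ) (q q' : Fin m × Fin n) :
    Amat Q piv β δ q q' = (Lstar Q piv + pairDiag δ)⁻¹ q q' * β q'.1 q'.2 :=
  Matrix.mul_diagonal _ _ _ _

theorem Amat_nonneg_and_AFstar_positive_general
    {n m : ℕ}
    (Q : Fin m → Matrix (Fin n) (Fin n) ℝ)
    (hQoff : ∀ (α : Fin m) (i j : Fin n), i ≠ j → 0 ≤ Q α i j)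
    (hQdiag : ∀ (α : Fin m) (i : Fin n), Q α i i = -∑ j ∈ Finset.univ \ {i}, Q α i j)
    (hQirr : ∀ (α : Fin m) (i j : Fin n),
      Relation.ReflTransGen (fun a b => 0 < Q α a b) i j)
    (piv : Fin m → Fin n → ℝ) (hpivpos : ∀ α i, 0 < piv α i)
    (hpiveig : ∀ (α : Fin m) (i : Fin n), ∑ j, Q α j i * piv α j = 0)
    (N : Fin m → ℝ) (hN : ∀ α, 0 < N α)
    (β δ : Fin m → Fin n → ℝ)
    (hβ : ∀ α i, 0 < β α i) (hδ : ∀ α i, 0 ≤ δ α i)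
    (hδpos : ∀ α, ∃ k, 0 < δ α k)
 :
    IsUnit (Lstar Q piv + pairDiag δ) ∧
      (∀ q q' : Fin m × Fin n, 0 ≤ Amat Q piv β δ q q') ∧
      (∀ q q' : Fin m × Fin n, q.1 = q'.1 → 0 < Amat Q piv β δ q q') ∧
      (∀ q q' : Fin m × Fin n, 0 < (Amat Q piv β δ * Fstar N piv) q q') ∧
      (∀ q q' : Fin m × Fin n,
        Relation.ReflTransGen
          (fun a b => a ≠ b ∧ (Amat Q piv β δ * Fstar N piv) a b ≠ 0) q q') := by
  have hM := isChainedDominantZMatrix_Lstar_add_pairDiag hQoff hQdiag hQirr hpivpos hpiveig hδ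
    hδpos
  have hAnn : ∀ q q', 0 ≤ Amat Q piv β δ q q' := fun q q' => by
    rw [Amat_apply]
    exact mul_nonneg (hM.inv_apply_nonneg q q') (hβ _ _).le
  have hApos : ∀ q q' : Fin m × Fin n, q.1 = q'.1 → 0 < Amat Q piv β δ q q' := by
    rintro ⟨α, i⟩ ⟨σ, k⟩ (rfl : α = σ)
    rw [Amat_apply]
    exact mul_pos (hM.inv_apply_pos (reflTransGen_Lstar_add_pairDiag hQoff hQdiag hQirr
      hpivpos α i k)) (hβ _ _)
  have hAFpos : ∀ q q', 0 < (Amat Q piv β δ * Fstar N piv) q q' := fun q q' =>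
    Matrix.mul_apply_pos_of_nonneg hAnn (Fstar_nonneg (fun α => (hN α).le)
      (fun α i => (hpivpos α i).le)) (q.1, q'.2) (hApos _ _ rfl) (Fstar_pos hN hpivpos rfl)
  refine ⟨hM.isUnit, hAnn, hApos, hAFpos, fun q q' => ?_⟩
  rcases eq_or_ne q q' with rfl | h
  · exact .refl
  · exact .single ⟨h, (hAFpos q q').ne'⟩

/-- The matrix `L* + D` is invertible, `A = (L* + D)⁻¹ B` is entrywise
nonnegative with each diagonal layer block entrywise positive, and `A F*` is an
entrywise-positive (hence irreducible) `nm × nm` matrix. -/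
theorem Amat_nonneg_and_AFstar_positive
    {n m : ℕ} (hn : 2 ≤ n) (hm : 1 ≤ m)
    (Q : Fin m → Matrix (Fin n) (Fin n) ℝ)
    (hQoff : ∀ (α : Fin m) (i j : Fin n), i ≠ j → 0 ≤ Q α i j)
    (hQdiag : ∀ (α : Fin m) (i : Fin n), Q α i i = -∑ j ∈ Finset.univ \ {i}, Q α i j)
    (hQirr : ∀ (α : Fin m) (i j : Fin n),
      Relation.ReflTransGen (fun a b => 0 < Q α a b) i j)
    (piv : Fin m → Fin n → ℝ) (hpivpos : ∀ α i, 0 < piv α i)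
    (hpiveig : ∀ (α : Fin m) (i : Fin n), ∑ j, Q α j i * piv α j = 0)
    (hpivsum : ∀ α, ∑ i, piv α i = 1)
    (N : Fin m → ℝ) (hN : ∀ α, 0 < N α)
    (β δ : Fin m → Fin n → ℝ)
    (hβ : ∀ α i, 0 < β α i) (hδ : ∀ α i, 0 ≤ δ α i)
    (hδpos : ∀ α, ∃ k, 0 < δ α k)
 :
    IsUnit (Lstar Q piv + pairDiag δ) ∧
      (∀ q q' : Fin m × Fin n, 0 ≤ Amat Q piv β δ q q') ∧
      (∀ q q' : Fin m × Fin n, q.1 = q'.1 → 0 < Amat Q piv β δ q q') ∧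
      (∀ q q' : Fin m × Fin n, 0 < (Amat Q piv β δ * Fstar N piv) q q') ∧
      (∀ q q' : Fin m × Fin n,
        Relation.ReflTransGen
          (fun a b => a ≠ b ∧ (Amat Q piv β δ * Fstar N piv) a b ≠ 0) q q') :=
  Amat_nonneg_and_AFstar_positive_general Q hQoff hQdiag hQirr piv hpivpos hpiveig N hN β δ hβ hδ
    hδpos
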